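/- arXiv:2409.09757 — 6 statements merged into one kernel-verified Lean document; each statement's English description precedes it below -/
import Mathlib

section
/- Let M be a commutative monoid with zero. Then an ideal L of M is irreducible if and only if it is strongly irreducible. (The nontrivial direction: if L = I ∩ J forces L = I or L = J for all ideals I, J, then I ∩ J ⊆ L forces I ⊆ L or J ⊆ L for all ideals I, J.) -/
/-- An ideal of a commutative monoid: a nonempty subset `I` such that
`i ∈ I` and `m ∈ N` imply `i * m ∈ I`. -/
def IsIdeal {N : Type*} [CommMonoid N] (I : Set N) : Prop :=
  I.Nonempty ∧ ∀ i ∈ I, ∀ m : N, i * m ∈ I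

/-- The irreducibility condition on an ideal `L`: whenever `L = I ∩ J` for
ideals `I`, `J`, then `L = I` or `L = J`. -/
def IrredCond {N : Type*} [CommMonoid N] (L : Set N) : Prop :=
  ∀ I J : Set N, IsIdeal I → IsIdeal J → L = I ∩ J → L = I ∨ L = J

/-- The strong irreducibility condition on an ideal `L`: whenever
`I ∩ J ⊆ L` for ideals `I`, `J`, then `I ⊆ L` or `J ⊆ L`. -/
def StrIrredCond {N : Type*} [CommMonoid N] (L : Set N) : Prop :=
  ∀ I J : Set N, IsIdeal I → IsIdeal J → I ∩ J ⊆ L → I ⊆ L ∨ J ⊆ L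

/-- The radical of a subset `I`: all elements some positive power of which
lies in `I`. -/
def radicalSet {N : Type*} [CommMonoid N] (I : Set N) : Set N :=
  {m : N | ∃ k : ℕ, 0 < k ∧ m ^ k ∈ I}

/-- A primary ideal: a proper ideal `I` such that `x * y ∈ I` implies
`x ∈ I` or `y ^ k ∈ I` for some positive integer `k`. -/
def IsPrimaryIdeal {N : Type*} [CommMonoid N] (I : Set N) : Prop :=
  IsIdeal I ∧ I ≠ Set.univ ∧
    ∀ x y : N, x * y ∈ I → x ∈ I ∨ ∃ k : ℕ, 0 < k ∧ y ^ k ∈ I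

section

variable {N : Type*} [CommMonoid N]

lemma IsIdeal.union {I J : Set N} (hI : IsIdeal I) (hJ : IsIdeal J) : IsIdeal (I ∪ J) := by
  refine ⟨hI.1.mono Set.subset_union_left, ?_⟩
  rintro i (hi | hi) m
  · exact Or.inl (hI.2 i hi m)
  · exact Or.inr (hJ.2 i hi m)

lemma StrIrredCond.irredCond {L : Set N} (h : StrIrredCond L) : IrredCond L := by
  intro I J hI hJ hL
  rcases h I J hI hJ hL.ge with hIL | hJL
  · exact Or.inl (hL ▸ Set.inter_subset_left |>.antisymm hIL)
  · exact Or.inr (hL ▸ Set.inter_subset_right |>.antisymm hJL)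

lemma IrredCond.strIrredCond {L : Set N} (hL : IsIdeal L) (h : IrredCond L) :
    StrIrredCond L := by
  intro I J hI hJ hIJ
  have hdecomp : L = (L ∪ I) ∩ (L ∪ J) := by
    rw [← Set.union_inter_distrib_left, Set.union_eq_left.mpr hIJ]
  rcases h _ _ (hL.union hI) (hL.union hJ) hdecomp with hLI | hLJ
  · exact Or.inl (Set.union_eq_left.mp hLI.symm)
  · exact Or.inr (Set.union_eq_left.mp hLJ.symm)

end

/-- In a commutative monoid with zero, an ideal is irreducible iff it is
strongly irreducible. -/
theorem irreducible_iff_strongly_irreducible {M : Type*} [CommMonoidWithZero M]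
    (L : Set M) (hL : IsIdeal L) :
    IrredCond L ↔ StrIrredCond L :=
  ⟨IrredCond.strIrredCond hL, StrIrredCond.irredCond⟩
end

section
/- Let M be a commutative monoid with zero. Then every proper ideal of M is irreducible if and only if any two ideals of M are comparable under inclusion (i.e., the ideals of M form a chain). -/
theorem IsIdeal.inter {N : Type*} [CommMonoid N] {I J : Set N} (hI : IsIdeal I)
    (hJ : IsIdeal J) : IsIdeal (I ∩ J) := by
  obtain ⟨⟨i, hi⟩, hImul⟩ := hI
  obtain ⟨⟨j, hj⟩, hJmul⟩ := hJ
  refine ⟨⟨i * j, hImul i hi j, mul_comm j i ▸ hJmul j hj i⟩, fun x hx m => ?_⟩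
  exact ⟨hImul x hx.1 m, hJmul x hx.2 m⟩

theorem IrredCond.subset_or_subset_of_inter {N : Type*} [CommMonoid N] {I J : Set N}
    (h : IrredCond (I ∩ J)) (hI : IsIdeal I) (hJ : IsIdeal J) : I ⊆ J ∨ J ⊆ I := by
  rcases h I J hI hJ rfl with hIJ | hIJ
  · exact Or.inl (Set.inter_eq_left.mp hIJ)
  · exact Or.inr (Set.inter_eq_right.mp hIJ)

theorem irredCond_of_subset_or_subset {N : Type*} [CommMonoid N]
    (h : ∀ I J : Set N, IsIdeal I → IsIdeal J → I ⊆ J ∨ J ⊆ I) (L : Set N) : IrredCond L := by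
  intro I J hI hJ hL
  rcases h I J hI hJ with hIJ | hJI
  · exact Or.inl (hL.trans (Set.inter_eq_left.mpr hIJ))
  · exact Or.inr (hL.trans (Set.inter_eq_right.mpr hJI))

/-- Every proper ideal of a commutative monoid with zero is irreducible iff
any two ideals are comparable under inclusion. -/
theorem all_proper_irreducible_iff_chain {M : Type*} [CommMonoidWithZero M] :
    (∀ L : Set M, IsIdeal L → L ≠ Set.univ → IrredCond L) ↔
    (∀ I J : Set M, IsIdeal I → IsIdeal J → I ⊆ J ∨ J ⊆ I) := by
  refine ⟨fun h I J hI hJ => ?_, fun h L _ _ => irredCond_of_subset_or_subset h L⟩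
  by_cases hIJ : I ∩ J = Set.univ
  · exact Or.inl ((inf_eq_top_iff.mp hIJ).2 ▸ Set.subset_univ I)
  · exact (h _ (hI.inter hJ) hIJ).subset_or_subset_of_inter hI hJ
end

section
/- Let M be a commutative monoid with zero, S a submonoid of M, and let M_S denote the localization of M at S. If I is a proper strongly irreducible ideal of M_S, then its contraction I^c = {m ∈ M : mk(m,1) ∈ I} is a strongly irreducible proper ideal of M that is disjoint from S. -/
theorem IsIdeal.eq_univ_of_isUnit_mem {N : Type*} [CommMonoid N] {I : Set N} (hI : IsIdeal I)
    {u : N} (hu : IsUnit u) (huI : u ∈ I) : I = Set.univ := by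
  obtain ⟨u, rfl⟩ := hu
  exact Set.eq_univ_of_forall fun x => by
    simpa only [Units.mul_inv_cancel_left] using hI.2 u huI (↑u⁻¹ * x)

namespace Localization

variable {M : Type*} [CommMonoid M] (S : Submonoid M)

def extension (A : Set M) : Set (Localization S) :=
  {x | ∃ a ∈ A, ∃ s : S, x = mk a s}

variable {S}

theorem mk_one_mem_extension {A : Set M} {a : M} (ha : a ∈ A) : mk a 1 ∈ extension S A :=
  ⟨a, ha, 1, rfl⟩

theorem mk_mul_mul_left (c : S) (a : M) (s : S) : mk (c * a) (c * s) = mk a s := by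
  rw [mk_eq_mk_iff, r_iff_exists]
  exact ⟨1, by simp only [Submonoid.coe_mul]; ac_rfl⟩

theorem isIdeal_extension {A : Set M} (hA : IsIdeal A) : IsIdeal (extension S A) := by
  obtain ⟨⟨a, ha⟩, hmul⟩ := hA
  refine ⟨⟨_, mk_one_mem_extension ha⟩, ?_⟩
  rintro _ ⟨a, ha, s, rfl⟩ x
  induction x using induction_on with
  | H y => exact ⟨a * y.1, hmul a ha y.1, s * y.2, mk_mul _ _ _ _⟩

/-- If `a / s = b / t`, then `c t a = c s b` for some `c ∈ S`, and this common element of `A ∩ B`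
over `c t s` represents the same fraction. -/
theorem extension_inter_subset {A B : Set M} (hA : IsIdeal A) (hB : IsIdeal B) :
    extension S A ∩ extension S B ⊆ extension S (A ∩ B) := by
  rintro _ ⟨⟨a, ha, s, rfl⟩, ⟨b, hb, t, hab⟩⟩
  obtain ⟨c, hc⟩ := r_iff_exists.1 (mk_eq_mk_iff.1 hab)
  have hcomm : (c * t : M) * a = c * s * b := by simpa only [mul_assoc] using hc
  refine ⟨c * t * a, ⟨?_, ?_⟩, c * t * s, ?_⟩
  · simpa only [mul_comm] using hA.2 a ha (c * t)
  · rw [hcomm, mul_comm]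
    exact hB.2 b hb (c * s)
  · simpa only [Submonoid.coe_mul] using (mk_mul_mul_left (c * t) a s).symm

theorem extension_subset_of_subset_contraction {A : Set M} {I : Set (Localization S)}
    (hI : IsIdeal I) (hA : A ⊆ {m | mk m 1 ∈ I}) : extension S A ⊆ I := by
  rintro _ ⟨a, ha, s, rfl⟩
  simpa [mk_mul] using hI.2 _ (hA ha) (mk 1 s)

theorem isIdeal_contraction {I : Set (Localization S)} (hI : IsIdeal I) :
    IsIdeal {m : M | mk m 1 ∈ I} := by
  refine ⟨?_, fun m hm x => ?_⟩
  · obtain ⟨y, hy⟩ := hI.1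
    induction y using induction_on with
    | H y =>
      refine ⟨y.1, ?_⟩
      have := hI.2 _ hy (mk (y.2 : M) 1)
      rwa [mk_mul, mul_comm, ← mul_one y.2, mk_mul_mul_left] at this
  · simpa [mk_mul] using hI.2 _ hm (mk x 1)

theorem contraction_inter_eq_empty {I : Set (Localization S)} (hI : IsIdeal I)
    (hproper : I ≠ Set.univ) : {m : M | mk m 1 ∈ I} ∩ (S : Set M) = ∅ :=
  Set.eq_empty_of_forall_notMem fun s ⟨hsI, hs⟩ =>
    hproper (hI.eq_univ_of_isUnit_mem ((monoidOf S).map_units ⟨s, hs⟩) hsI)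

theorem strIrredCond_contraction {I : Set (Localization S)} (hI : IsIdeal I)
    (hstr : StrIrredCond I) : StrIrredCond {m : M | mk m 1 ∈ I} := by
  intro A B hA hB hAB
  have hext : extension S A ∩ extension S B ⊆ I :=
    (extension_inter_subset hA hB).trans (extension_subset_of_subset_contraction hI hAB)
  rcases hstr _ _ (isIdeal_extension hA) (isIdeal_extension hB) hext with hAI | hBI
  · exact Or.inl fun a ha => hAI (mk_one_mem_extension ha)
  · exact Or.inr fun b hb => hBI (mk_one_mem_extension hb)

end Localization

/-- The contraction of a proper strongly irreducible ideal of the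
localization `M_S` is a proper strongly irreducible ideal of `M` disjoint
from `S`. -/
theorem contraction_strongly_irreducible {M : Type*} [CommMonoidWithZero M]
    (S : Submonoid M) (I : Set (Localization S))
    (hI : IsIdeal I) (hproper : I ≠ Set.univ) (hstr : StrIrredCond I) :
    IsIdeal {m : M | Localization.mk m 1 ∈ I} ∧
    {m : M | Localization.mk m 1 ∈ I} ≠ Set.univ ∧
    StrIrredCond {m : M | Localization.mk m 1 ∈ I} ∧
    {m : M | Localization.mk m 1 ∈ I} ∩ (S : Set M) = ∅ := by
  have hdisj := Localization.contraction_inter_eq_empty hI hproper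
  refine ⟨Localization.isIdeal_contraction hI, fun huniv => ?_,
    Localization.strIrredCond_contraction hI hstr, hdisj⟩
  rw [huniv, Set.univ_inter] at hdisj
  exact Set.eq_empty_iff_forall_notMem.1 hdisj 1 S.one_mem
end

section
/- Let M be a nontrivial commutative monoid with zero, and let 𝔪 denote its unique maximal ideal (the set of non-invertible elements). The following are equivalent: (1) every primary ideal of the localization of M at the submonoid M∖𝔪 is irreducible; (2) every primary ideal of M is irreducible; (3) for every prime ideal P of M, every primary ideal of the localization of M at the submonoid M∖P is irreducible. -/
/-- The submonoid of invertible elements of `M`, i.e. the complement of the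
unique maximal ideal `𝔪` of non-invertible elements. -/
def unitsSubmonoid (M : Type*) [CommMonoidWithZero M] : Submonoid M where
  carrier := {m : M | ∃ v : M, m * v = 1}
  one_mem' := ⟨1, one_mul 1⟩
  mul_mem' := by
    rintro a b ⟨u, hu⟩ ⟨v, hv⟩
    exact ⟨u * v, by rw [mul_mul_mul_comm, hu, hv, one_mul]⟩

/-- The complement `M ∖ P` of a prime ideal `P`, as a submonoid of `M`. -/
def primeCompl {M : Type*} [CommMonoidWithZero M] (P : Set M)
    (hP : IsIdeal P) (hproper : P ≠ Set.univ)
    (hprime : ∀ x y : M, x * y ∈ P → x ∈ P ∨ y ∈ P) : Submonoid M where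
  carrier := Pᶜ
  one_mem' := fun h1 => hproper (Set.eq_univ_of_forall fun m => by
    simpa using hP.2 1 h1 m)
  mul_mem' := by
    intro a b ha hb hab
    exact (hprime a b hab).elim ha hb
/-!
Contracting ideals along a localization map `M → S⁻¹M` preserves primary ideals and
intersections and reflects inclusions between ideals; hence if the primary ideals of `M` are
irreducible, so are those of every localization of `M`. Conversely, `M ∖ 𝔪` consists of units, so
the localization at `M ∖ 𝔪` maps onto `M` (isomorphically), and contracting along that map gives
(1) ⇒ (2); and `𝔪` is itself prime, so (1) is the case `P = 𝔪` of (3).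
-/
def PrimaryIdealsIrreducible (N : Type*) [CommMonoid N] : Prop :=
  ∀ Q : Set N, IsPrimaryIdeal Q → IrredCond Q

theorem IsIdeal.eq_univ_of_one_mem {N : Type*} [CommMonoid N] {I : Set N} (hI : IsIdeal I)
    (h1 : (1 : N) ∈ I) : I = Set.univ :=
  Set.eq_univ_of_forall fun m => by simpa using hI.2 1 h1 m

section Contraction

variable {N N' : Type*} [CommMonoidWithZero N] [CommMonoidWithZero N']

theorem IsIdeal.zero_mem {I : Set N} (hI : IsIdeal I) : (0 : N) ∈ I := by
  obtain ⟨i, hi⟩ := hI.1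
  simpa using hI.2 i hi 0

theorem IsIdeal.preimage {f : N →* N'} (hf₀ : f 0 = 0) {I : Set N'} (hI : IsIdeal I) :
    IsIdeal (f ⁻¹' I) :=
  ⟨⟨0, by simpa [Set.mem_preimage, hf₀] using hI.zero_mem⟩,
    fun i hi m => by simpa only [Set.mem_preimage, map_mul] using hI.2 _ hi (f m)⟩

theorem IsPrimaryIdeal.preimage {f : N →* N'} (hf₀ : f 0 = 0) {Q : Set N'}
    (hQ : IsPrimaryIdeal Q) : IsPrimaryIdeal (f ⁻¹' Q) := by
  refine ⟨hQ.1.preimage hf₀, fun huniv => hQ.2.1 (hQ.1.eq_univ_of_one_mem ?_), fun x y hxy => ?_⟩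
  · simpa using (huniv.symm ▸ Set.mem_univ (1 : N) : (1 : N) ∈ f ⁻¹' Q)
  · rw [Set.mem_preimage, map_mul] at hxy
    simpa only [Set.mem_preimage, map_pow] using hQ.2.2 _ _ hxy

theorem PrimaryIdealsIrreducible.of_preimage_reflects {f : N →* N'} (hf₀ : f 0 = 0)
    (hf : ∀ A B : Set N', IsIdeal A → IsIdeal B → f ⁻¹' A ⊆ f ⁻¹' B → A ⊆ B)
    (h : PrimaryIdealsIrreducible N) : PrimaryIdealsIrreducible N' := by
  intro Q hQ I J hI hJ hQIJ
  have hcap : f ⁻¹' Q = f ⁻¹' I ∩ f ⁻¹' J := by rw [hQIJ, Set.preimage_inter]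
  rcases h _ (hQ.preimage hf₀) _ _ (hI.preimage hf₀) (hJ.preimage hf₀) hcap with hc | hc
  · exact Or.inl ((hQIJ ▸ Set.inter_subset_left).antisymm (hf I Q hI hQ.1 hc.ge))
  · exact Or.inr ((hQIJ ▸ Set.inter_subset_right).antisymm (hf J Q hJ hQ.1 hc.ge))

theorem PrimaryIdealsIrreducible.of_surjective {f : N →*₀ N'} (hf : Function.Surjective f)
    (h : PrimaryIdealsIrreducible N) : PrimaryIdealsIrreducible N' :=
  h.of_preimage_reflects (f := f.toMonoidHom) f.map_zero
    fun _ _ _ _ => hf.preimage_subset_preimage_iff.1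

end Contraction

namespace Submonoid.LocalizationMap

variable {M N : Type*} [CommMonoidWithZero M] [CommMonoidWithZero N] {S : Submonoid M}

theorem subset_of_preimage_subset (f : S.LocalizationMap N) {A B : Set N}
    (hA : IsIdeal A) (hB : IsIdeal B) (h : f ⁻¹' A ⊆ f ⁻¹' B) : A ⊆ B := by
  intro z hz
  obtain ⟨x, y, rfl⟩ := f.mk'_surjective z
  have hx : x ∈ f ⁻¹' A := by simpa only [Set.mem_preimage, f.mk'_spec] using hA.2 _ hz (f y)
  have hxy := hB.2 _ (h hx) (f.mk' 1 y)
  rwa [mul_comm, f.mk'_mul_eq_mk'_of_mul, mul_one] at hxy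

theorem primaryIdealsIrreducible (f : S.LocalizationMap N) (h : PrimaryIdealsIrreducible M) :
    PrimaryIdealsIrreducible N :=
  h.of_preimage_reflects (f := f.toMonoidHom) f.map_zero fun _ _ => f.subset_of_preimage_subset

end Submonoid.LocalizationMap

section Nonunits

variable {M : Type*}

theorem nonunits_ne_univ [Monoid M] : nonunits M ≠ Set.univ :=
  fun h => one_notMem_nonunits (h ▸ Set.mem_univ (1 : M))

theorem mem_nonunits_or_of_mul_mem [CommMonoid M] {x y : M} (h : x * y ∈ nonunits M) :
    x ∈ nonunits M ∨ y ∈ nonunits M := by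
  simp only [mem_nonunits_iff, IsUnit.mul_iff] at h ⊢
  tauto

variable [CommMonoidWithZero M]

theorem isIdeal_nonunits [Nontrivial M] : IsIdeal (nonunits M) :=
  ⟨⟨0, zero_mem_nonunits.2 zero_ne_one⟩, fun _ hi _ => mul_mem_nonunits_left hi⟩

theorem mem_unitsSubmonoid_iff {m : M} : m ∈ unitsSubmonoid M ↔ IsUnit m :=
  isUnit_iff_exists_inv.symm

theorem primeCompl_nonunits [Nontrivial M] :
    primeCompl (nonunits M) isIdeal_nonunits nonunits_ne_univ
      (fun _ _ => mem_nonunits_or_of_mul_mem) = unitsSubmonoid M := by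
  ext m
  simp [primeCompl, mem_nonunits_iff, mem_unitsSubmonoid_iff]

theorem Localization.lift₀_unitsSubmonoid_surjective : Function.Surjective
    ((Localization.monoidOf (unitsSubmonoid M)).lift₀ (MonoidWithZeroHom.id M)
      fun y => mem_unitsSubmonoid_iff.1 y.2) :=
  fun m => ⟨Localization.monoidOf _ m, Submonoid.LocalizationMap.lift_eq _ _ m⟩

end Nonunits

/-- The following are equivalent: (1) every primary ideal of the localization
of `M` at `M ∖ 𝔪` is irreducible; (2) every primary ideal of `M` is
irreducible; (3) for every prime ideal `P` of `M`, every primary ideal of the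
localization of `M` at `M ∖ P` is irreducible. -/
theorem primary_irreducible_tfae {M : Type*} [CommMonoidWithZero M] [Nontrivial M] :
    ((∀ Q : Set (Localization (unitsSubmonoid M)), IsPrimaryIdeal Q → IrredCond Q) ↔
      (∀ Q : Set M, IsPrimaryIdeal Q → IrredCond Q)) ∧
    ((∀ Q : Set M, IsPrimaryIdeal Q → IrredCond Q) ↔
      (∀ (P : Set M) (hP : IsIdeal P) (hproper : P ≠ Set.univ)
        (hprime : ∀ x y : M, x * y ∈ P → x ∈ P ∨ y ∈ P),
        ∀ Q : Set (Localization (primeCompl P hP hproper hprime)),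
          IsPrimaryIdeal Q → IrredCond Q)) := by
  have h12 : PrimaryIdealsIrreducible (Localization (unitsSubmonoid M)) →
      PrimaryIdealsIrreducible M :=
    .of_surjective Localization.lift₀_unitsSubmonoid_surjective
  have hloc (S : Submonoid M) :
      PrimaryIdealsIrreducible M → PrimaryIdealsIrreducible (Localization S) :=
    (Localization.monoidOf S).primaryIdealsIrreducible
  refine ⟨⟨h12, hloc _⟩, ⟨fun h P _ _ _ => hloc _ h, fun h => h12 ?_⟩⟩
  have h31 := h (nonunits M) isIdeal_nonunits nonunits_ne_univ
    fun _ _ => mem_nonunits_or_of_mul_mem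
  rwa [primeCompl_nonunits] at h31
end

section
/- Let M be a commutative monoid with zero. Then every ideal I of M equals the intersection of all irreducible ideals of M containing I, i.e., I = ⋂ {J : J is an irreducible ideal of M and I ⊆ J}. -/
section

variable {N : Type*} [CommMonoid N]

theorem IsIdeal.sUnion {c : Set (Set N)} (hc : ∀ J ∈ c, IsIdeal J)
    (hne : c.Nonempty) : IsIdeal (⋃₀ c) := by
  obtain ⟨J, hJ⟩ := hne
  obtain ⟨x, hx⟩ := (hc J hJ).1
  exact ⟨⟨x, J, hJ, hx⟩, fun i ⟨K, hK, hiK⟩ m => ⟨K, hK, (hc K hK).2 i hiK m⟩⟩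

theorem exists_maximal_isIdeal_notMem {I : Set N} (hI : IsIdeal I) {a : N} (haI : a ∉ I) :
    ∃ L, I ⊆ L ∧ Maximal (fun J => IsIdeal J ∧ a ∉ J) L := by
  refine zorn_subset_nonempty _ (fun c hcS _ hne => ?_) I ⟨hI, haI⟩
  refine ⟨⋃₀ c, ⟨IsIdeal.sUnion (fun J hJ => (hcS hJ).1) hne, ?_⟩,
    fun _ => Set.subset_sUnion_of_mem⟩
  rintro ⟨J, hJ, haJ⟩
  exact (hcS hJ).2 haJ

/-- If `L = A ∩ B` avoids `a`, one of `A`, `B` avoids `a`, and maximality forces it to be `L`. -/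
theorem irredCond_of_maximal_notMem {a : N} {L : Set N}
    (hL : Maximal (fun J => IsIdeal J ∧ a ∉ J) L) : IrredCond L := by
  intro A B hA hB hLAB
  have haAB : a ∉ A ∩ B := hLAB ▸ hL.prop.2
  by_cases haA : a ∈ A
  · have haB : a ∉ B := fun haB => haAB ⟨haA, haB⟩
    exact Or.inr (hL.eq_of_subset ⟨hB, haB⟩ (hLAB ▸ Set.inter_subset_right))
  · exact Or.inl (hL.eq_of_subset ⟨hA, haA⟩ (hLAB ▸ Set.inter_subset_left))

end

/-- Every ideal `I` of a commutative monoid with zero is the intersection of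
all irreducible ideals containing it. -/
theorem ideal_eq_iInter_irreducible {M : Type*} [CommMonoidWithZero M]
    (I : Set M) (hI : IsIdeal I) :
    I = ⋂₀ {J : Set M | IsIdeal J ∧ IrredCond J ∧ I ⊆ J} := by
  refine (Set.subset_sInter fun J hJ => hJ.2.2).antisymm fun a ha => ?_
  by_contra haI
  obtain ⟨L, hIL, hL⟩ := exists_maximal_isIdeal_notMem hI haI
  exact hL.prop.2 (ha L ⟨hL.prop.1, irredCond_of_maximal_notMem hL, hIL⟩)
end

section
/- Let M be a Noetherian commutative monoid with zero (i.e., M satisfies the ascending chain condition on ideals). Then every proper ideal of M can be written as the intersection of a finite nonempty family of ideals, each of which is both irreducible and primary. -/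
/-! Noether's argument. By the ascending chain condition we may induct downwards on ideals: a
proper ideal that is not irreducible is the intersection of two strictly larger proper ideals, so
every proper ideal is a finite intersection of irreducible ones. An irreducible ideal `I` is
primary: if `x * y ∈ I`, pick `n` where the chain of colon ideals `(I : yᵏ)` has stabilised;
then `I = (I ∪ yⁿM) ∩ (I ∪ xM)`, so `yⁿ ∈ I` or `x ∈ I`. -/

open Set

section
variable {M : Type*} [CommMonoid M]

variable (M) in
def IdealACC : Prop :=
  ∀ f : ℕ → Set M, (∀ n, IsIdeal (f n)) → (∀ n, f n ⊆ f (n + 1)) →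
    ∃ N : ℕ, ∀ n : ℕ, N ≤ n → f n = f N

lemma IdealACC.wellFoundedGT (hM : IdealACC M) : WellFoundedGT {I : Set M // IsIdeal I} := by
  rw [wellFoundedGT_iff_monotone_chain_condition]
  intro a
  obtain ⟨N, hN⟩ := hM (fun n => (a n).1) (fun n => (a n).2) (fun n => a.monotone n.le_succ)
  exact ⟨N, fun m hm => Subtype.ext (hN m hm).symm⟩

lemma IsIdeal.preimage_mul_right {I : Set M} (hI : IsIdeal I) (a : M) :
    IsIdeal ((· * a) ⁻¹' I) := by
  obtain ⟨i, hi⟩ := hI.1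
  refine ⟨⟨i, hI.2 i hi a⟩, fun b hb m => ?_⟩
  simpa only [mem_preimage, mul_right_comm b m a] using hI.2 _ hb m

lemma IsIdeal.union_range_mul {I : Set M} (hI : IsIdeal I) (a : M) :
    IsIdeal (I ∪ range (a * ·)) := by
  obtain ⟨i, hi⟩ := hI.1
  refine ⟨⟨i, Or.inl hi⟩, ?_⟩
  rintro b (hb | ⟨m, rfl⟩) c
  · exact Or.inl (hI.2 b hb c)
  · exact Or.inr ⟨m * c, (mul_assoc a m c).symm⟩

lemma IsIdeal.eq_inter_union_range_mul {I : Set M} (hI : IsIdeal I) {a x y : M}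
    (hxy : x * y ∈ I) (ha : ∀ m, m * (a * y) ∈ I → m * a ∈ I) :
    I = (I ∪ range (a * ·)) ∩ (I ∪ range (x * ·)) := by
  refine Subset.antisymm (fun z hz => ⟨Or.inl hz, Or.inl hz⟩) ?_
  rintro z ⟨hz | ⟨m, rfl⟩, hz' | ⟨m', hm'⟩⟩
  any_goals assumption
  have : m * (a * y) ∈ I := by
    rw [← mul_assoc, mul_comm m, ← show x * m' = a * m from hm', mul_right_comm]
    exact hI.2 _ hxy m'
  simpa only [mul_comm m a] using ha m this

lemma IsPrimaryIdeal.of_irredCond (hM : IdealACC M) {I : Set M} (hI : IsIdeal I)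
    (hI' : I ≠ univ) (hirr : IrredCond I) : IsPrimaryIdeal I := by
  refine ⟨hI, hI', fun x y hxy => ?_⟩
  have hmono (k : ℕ) : (· * y ^ k) ⁻¹' I ⊆ (· * y ^ (k + 1)) ⁻¹' I := fun m hm => by
    simpa only [mem_preimage, pow_succ, ← mul_assoc] using hI.2 _ hm y
  obtain ⟨N, hN⟩ := hM _ (fun k => hI.preimage_mul_right (y ^ k)) hmono
  have hstable (m : M) (hm : m * (y ^ (N + 1) * y) ∈ I) : m * y ^ (N + 1) ∈ I := by
    have hm : m ∈ (· * y ^ (N + 2)) ⁻¹' I := by simpa only [mem_preimage, pow_succ] using hm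
    exact ((hN (N + 2) (by omega)).trans (hN (N + 1) (by omega)).symm ▸ hm :)
  rcases hirr _ _ (hI.union_range_mul _) (hI.union_range_mul x)
      (hI.eq_inter_union_range_mul hxy hstable) with h | h
  · exact Or.inr ⟨N + 1, N.succ_pos, h ▸ Or.inr ⟨1, mul_one _⟩⟩
  · exact Or.inl (h ▸ Or.inr ⟨1, mul_one _⟩)

def IsFiniteInterOfIrredCond (I : Set M) : Prop :=
  ∃ S : Set (Set M), S.Finite ∧ S.Nonempty ∧
    (∀ J ∈ S, IsIdeal J ∧ J ≠ univ ∧ IrredCond J) ∧ I = ⋂₀ S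

lemma IsFiniteInterOfIrredCond.inter {A B : Set M} (hA : IsFiniteInterOfIrredCond A)
    (hB : IsFiniteInterOfIrredCond B) : IsFiniteInterOfIrredCond (A ∩ B) := by
  obtain ⟨S, hSfin, hSne, hS, rfl⟩ := hA
  obtain ⟨T, hTfin, -, hT, rfl⟩ := hB
  exact ⟨S ∪ T, hSfin.union hTfin, hSne.mono subset_union_left,
    fun J hJ => hJ.elim (hS J) (hT J), (sInter_union S T).symm⟩

lemma IdealACC.isFiniteInterOfIrredCond (hM : IdealACC M) {I : Set M} (hI : IsIdeal I)
    (hI' : I ≠ univ) : IsFiniteInterOfIrredCond I := by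
  have := hM.wellFoundedGT
  suffices ∀ L : {I : Set M // IsIdeal I}, L.1 ≠ univ → IsFiniteInterOfIrredCond L.1 from
    this ⟨I, hI⟩ hI'
  intro L
  induction L using WellFoundedGT.induction with | _ L ih
  obtain ⟨L, hL⟩ := L
  intro hL'
  by_cases hirr : IrredCond L
  · exact ⟨{L}, finite_singleton L, singleton_nonempty L, by simpa using ⟨hL, hL', hirr⟩,
      (sInter_singleton L).symm⟩
  obtain ⟨A, B, hA, hB, hLAB, hLA, hLB⟩ : ∃ A B, IsIdeal A ∧ IsIdeal B ∧ L = A ∩ B ∧ L ≠ A ∧ L ≠ B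
    := by simpa [IrredCond] using hirr
  have hA' : A ≠ univ := by
    rintro rfl
    exact hLB (by rw [hLAB, univ_inter])
  have hB' : B ≠ univ := by
    rintro rfl
    exact hLA (by rw [hLAB, inter_univ])
  have hLA' : L ⊂ A := (hLAB ▸ inter_subset_left : L ⊆ A).ssubset_of_ne hLA
  have hLB' : L ⊂ B := (hLAB ▸ inter_subset_right : L ⊆ B).ssubset_of_ne hLB
  change IsFiniteInterOfIrredCond L
  rw [hLAB]
  exact (ih ⟨A, hA⟩ hLA' hA').inter (ih ⟨B, hB⟩ hLB' hB')

end

/-- In a Noetherian commutative monoid with zero, every proper ideal is a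
finite intersection of irreducible primary ideals. -/
theorem noetherian_irreducible_primary_decomposition {M : Type*} [CommMonoidWithZero M]
    (hNoeth : ∀ f : ℕ → Set M, (∀ n, IsIdeal (f n)) → (∀ n, f n ⊆ f (n + 1)) →
      ∃ N : ℕ, ∀ n : ℕ, N ≤ n → f n = f N) :
    ∀ I : Set M, IsIdeal I → I ≠ Set.univ →
      ∃ (n : ℕ) (F : Fin (n + 1) → Set M),
        (∀ i, IrredCond (F i) ∧ IsPrimaryIdeal (F i)) ∧ I = ⋂ i, F i := by
  intro I hI hI'
  obtain ⟨S, hSfin, hSne, hS, rfl⟩ := IdealACC.isFiniteInterOfIrredCond hNoeth hI hI'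
  obtain ⟨n, F, hF⟩ := hSfin.fin_embedding
  obtain ⟨k, rfl⟩ : ∃ k, n = k + 1 := Nat.exists_eq_succ_of_ne_zero <| by
    rintro rfl
    simp [← hF] at hSne
  refine ⟨k, F, fun i => ?_, by rw [← hF, sInter_range]⟩
  obtain ⟨hJ, hJ', hirr⟩ := hS (F i) (hF ▸ mem_range_self i)
  exact ⟨hirr, .of_irredCond hNoeth hJ hJ' hirr⟩
end
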